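/- Let C = e₁C₁ ⊕ e₂C₂ ⊕ e₃C₃ ⊕ e₄C₄ be a λ-constacyclic code of length n over R with generator polynomials gᵢ(x) of Cᵢ satisfying gᵢ(x)hᵢ(x) = xⁿ - λᵢ in F_q[x]. Then C^⊥ = ⟨e₁h₁*(x) + e₂h₂*(x) + e₃h₃*(x) + e₄h₄*(x)⟩, where hᵢ* denotes the reciprocal polynomial of hᵢ. -/

import Mathlib

set_option synthInstance.maxHeartbeats 1000000
set_option maxHeartbeats 1000000
set_option maxSynthPendingDepth 2

noncomputable section

open MvPolynomial

/-- Generators u^2-u, v^2-v of the defining ideal. -/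
def genSet (F : Type) [Field F] : Set (MvPolynomial (Fin 2) F) :=
  {X 0 ^ 2 - X 0, X 1 ^ 2 - X 1}

/-- The ring R = F_q[u,v]/(u^2-u, v^2-v). -/
abbrev Rq (F : Type) [Field F] := MvPolynomial (Fin 2) F ⧸ Ideal.span (genSet F)

/-- The image of u in R. -/
def uu (F : Type) [Field F] : Rq F := Ideal.Quotient.mk _ (X 0)

/-- The image of v in R. -/
def vv (F : Type) [Field F] : Rq F := Ideal.Quotient.mk _ (X 1)

/-- The idempotents e1 = 1-u-v+uv, e2 = uv, e3 = u-uv, e4 = v-uv. -/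
def ee (F : Type) [Field F] : Fin 4 → Rq F :=
  ![1 - uu F - vv F + uu F * vv F, uu F * vv F, uu F - uu F * vv F, vv F - uu F * vv F]

/-- Evaluation of R at a point (x,y) with x^2 = x, y^2 = y. -/
def phi4 (F : Type) [Field F] (p : Fin 2 → F) (hp : ∀ i, p i ^ 2 = p i) : Rq F →+* F :=
  Ideal.Quotient.lift _ (aeval p).toRingHom (by
    intro a ha
    have h : Ideal.span (genSet F) ≤ RingHom.ker (aeval p).toRingHom := by
      rw [Ideal.span_le]
      rintro g (rfl | rfl) <;> simp [RingHom.mem_ker, hp 0, hp 1]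
    exact h ha)

/-- The projections φ₁, φ₂, φ₃, φ₄ : R → F_q sending a+bu+cv+duv to
a, a+b+c+d, a+b, a+c respectively (i.e. evaluation at (0,0),(1,1),(1,0),(0,1)). -/
def phiI (F : Type) [Field F] : Fin 4 → (Rq F →+* F) :=
  ![phi4 F ![0,0] (by intro i; fin_cases i <;> norm_num),
    phi4 F ![1,1] (by intro i; fin_cases i <;> norm_num),
    phi4 F ![1,0] (by intro i; fin_cases i <;> norm_num),
    phi4 F ![0,1] (by intro i; fin_cases i <;> norm_num)]

/-- The ring homomorphism R[x]/(xⁿ-λ) → F[x]/(xⁿ-φᵢ(λ)) induced by φᵢ. -/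
def quotMap (F : Type) [Field F] (n : ℕ) (lam : Rq F) (i : Fin 4) :
    (Polynomial (Rq F) ⧸ Ideal.span {Polynomial.X ^ n - Polynomial.C lam}) →+*
    (Polynomial F ⧸ Ideal.span {Polynomial.X ^ n - Polynomial.C (phiI F i lam)}) :=
  Ideal.Quotient.lift _
    ((Ideal.Quotient.mk (Ideal.span {Polynomial.X ^ n - Polynomial.C (phiI F i lam)})).comp
      (Polynomial.mapRingHom (phiI F i))) (by
    intro a ha
    have h : Ideal.span {Polynomial.X ^ n - Polynomial.C lam} ≤
        RingHom.ker ((Ideal.Quotient.mk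
            (Ideal.span {Polynomial.X ^ n - Polynomial.C (phiI F i lam)})).comp
          (Polynomial.mapRingHom (phiI F i))) := by
      rw [Ideal.span_le]
      rintro g rfl
      have : (Polynomial.mapRingHom (phiI F i)) (Polynomial.X ^ n - Polynomial.C lam) =
          Polynomial.X ^ n - Polynomial.C (phiI F i lam) := by
        simp
      simp only [SetLike.mem_coe, RingHom.mem_ker, RingHom.comp_apply, this,
        Ideal.Quotient.eq_zero_iff_mem]
      exact Ideal.subset_span rfl
    exact h ha)

/-- The dual of a code with respect to the standard inner product. -/
def dualCode {S ι : Type} [CommRing S] [Fintype ι] (C : Set (ι → S)) : Set (ι → S) :=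
  {r | ∀ s ∈ C, ∑ j, r j * s j = 0}

/-- The set of coefficient vectors of a μ-constacyclic code, viewed as an ideal of
S[x]/(xⁿ-μ). -/
def vecOf {S : Type} [CommRing S] {n : ℕ} (μ : S)
    (C : Ideal (Polynomial S ⧸ Ideal.span {Polynomial.X ^ n - Polynomial.C μ})) :
    Set (Fin n → S) :=
  {c | Ideal.Quotient.mk _ (∑ j, Polynomial.C (c j) * Polynomial.X ^ (j : ℕ)) ∈ C}

/-- The reciprocal polynomial f*(x) = x^{r+i} f(1/x), where r = deg f and i is the
smallest index of a nonzero coefficient. -/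
def recip {F : Type} [Field F] (f : Polynomial F) : Polynomial F :=
  Polynomial.X ^ f.natTrailingDegree * f.reverse

/-! The projections `φᵢ` identify `R` with `F⁴` (every `r` equals `∑ φᵢ(r) eᵢ`), and accordingly
`R[x]/(xⁿ - λ)` with the product of the `F[x]/(xⁿ - λᵢ)`. A vector is orthogonal to `C` iff each
component `φᵢ ∘ r` is orthogonal to `Cᵢ = ⟨gᵢ⟩`, and lies in `⟨∑ eᵢ hᵢ*⟩` iff each component lies
in `⟨hᵢ*⟩`, so it suffices to treat a field.

Over a field, `⟨g⟩` consists of the coefficient vectors of `g a` with `deg a < deg h`, spanned by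
those of `g xˡ`. Since `h(0) ≠ 0`, `h* = h.reverse`, and reversing `g h = xⁿ - ν` gives
`h* · (-ν⁻¹ g.reverse) = xⁿ - ν⁻¹`, so `⟨h*⟩` is spanned by the vectors of `h* xᵏ`, `k < deg g`.
The dot product of the vectors of `g xˡ` and `h* xᵏ` is a coefficient of `g h = xⁿ - ν` of index
strictly between `0` and `n`, hence zero; and the dimensions `deg h`, `deg g` add up to `n`. -/

open scoped Polynomial

section CoeffVector
variable {S : Type} [CommRing S] {n : ℕ}

def toPoly (c : Fin n → S) : S[X] :=
  ∑ j : Fin n, Polynomial.C (c j) * Polynomial.X ^ (j : ℕ)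

lemma mem_vecOf {μ : S} {I : Ideal (S[X] ⧸ Ideal.span {Polynomial.X ^ n - Polynomial.C μ})}
    {c : Fin n → S} : c ∈ vecOf μ I ↔ Ideal.Quotient.mk _ (toPoly c) ∈ I :=
  Iff.rfl

lemma coeff_toPoly (c : Fin n → S) (j : Fin n) : (toPoly c).coeff j = c j := by
  simp [toPoly, Polynomial.finsetSum_coeff, Polynomial.coeff_X_pow, Fin.val_inj]

lemma degree_toPoly_lt (c : Fin n → S) : (toPoly c).degree < n := by
  rw [← Polynomial.mem_degreeLT]
  exact Submodule.sum_mem _ fun j _ =>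
    Polynomial.mem_degreeLT.mpr ((Polynomial.degree_C_mul_X_pow_le _ _).trans_lt
      (by exact_mod_cast j.isLt))

lemma toPoly_coeff_of_degree_lt {p : S[X]} (hp : p.degree < n) :
    toPoly (fun j : Fin n => p.coeff j) = p := by
  ext k
  by_cases hk : k < n
  · exact coeff_toPoly _ ⟨k, hk⟩
  · have hnk : (n : WithBot ℕ) ≤ k := by exact_mod_cast not_lt.mp hk
    rw [Polynomial.coeff_eq_zero_of_degree_lt ((degree_toPoly_lt _).trans_le hnk),
      Polynomial.coeff_eq_zero_of_degree_lt (hp.trans_le hnk)]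

lemma map_toPoly {T : Type} [CommRing T] (f : S →+* T) (c : Fin n → S) :
    (toPoly c).map f = toPoly (f ∘ c) := by
  simp [toPoly, Polynomial.map_sum]

lemma exists_mk_toPoly_eq [Nontrivial S] (hn : 0 < n) (μ : S)
    (z : S[X] ⧸ Ideal.span {Polynomial.X ^ n - Polynomial.C μ}) :
    ∃ c : Fin n → S, Ideal.Quotient.mk _ (toPoly c) = z := by
  obtain ⟨p, rfl⟩ := Ideal.Quotient.mk_surjective z
  have hM := Polynomial.monic_X_pow_sub_C μ hn.ne'
  refine ⟨fun j => (p %ₘ (Polynomial.X ^ n - Polynomial.C μ)).coeff j, ?_⟩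
  have hdeg := Polynomial.degree_modByMonic_lt p hM
  rw [Polynomial.degree_X_pow_sub_C hn] at hdeg
  rw [toPoly_coeff_of_degree_lt hdeg, Ideal.Quotient.eq, Ideal.mem_span_singleton]
  exact ⟨-(p /ₘ (Polynomial.X ^ n - Polynomial.C μ)), by
    rw [Polynomial.modByMonic_eq_sub_mul_div p (Polynomial.X ^ n - Polynomial.C μ)]; ring⟩

def truncCoeffs (n : ℕ) : S[X] →ₗ[S] (Fin n → S) :=
  LinearMap.pi fun j : Fin n => Polynomial.lcoeff S j

lemma truncCoeffs_dotProduct_reflect {D : ℕ} (hD : D < n) (p : S[X]) {q : S[X]}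
    (hq : q.natDegree ≤ D) :
    truncCoeffs n p ⬝ᵥ truncCoeffs n (Polynomial.reflect D q) = (p * q).coeff D := by
  have hterm (j : ℕ) : p.coeff j * (Polynomial.reflect D q).coeff j =
      if j ≤ D then p.coeff j * q.coeff (D - j) else 0 := by
    rw [Polynomial.coeff_reflect]
    split_ifs with hj
    · rw [Polynomial.revAt_le hj]
    · rw [Polynomial.revAt_eq_self_of_lt (not_le.mp hj),
        Polynomial.coeff_eq_zero_of_natDegree_lt (p := q) (by omega), mul_zero]
  calc truncCoeffs n p ⬝ᵥ truncCoeffs n (Polynomial.reflect D q)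
      = ∑ j ∈ Finset.range n, p.coeff j * (Polynomial.reflect D q).coeff j :=
        Fin.sum_univ_eq_sum_range (fun j => p.coeff j * (Polynomial.reflect D q).coeff j) n
    _ = ∑ j ∈ Finset.range (D + 1), p.coeff j * q.coeff (D - j) := by
        rw [Finset.sum_congr rfl fun j _ => hterm j, ← Finset.sum_filter]
        congr 1
        ext j
        simp only [Finset.mem_filter, Finset.mem_range]
        omega
    _ = (p * q).coeff D := by
        rw [Polynomial.coeff_mul, Finset.Nat.sum_antidiagonal_eq_sum_range_succ
          (fun i j => p.coeff i * q.coeff j)]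

lemma eq_of_mk_eq_of_degree_lt [Nontrivial S] (hn : 0 < n) (μ : S) {p q : S[X]}
    (h : Ideal.Quotient.mk (Ideal.span {Polynomial.X ^ n - Polynomial.C μ}) p =
      Ideal.Quotient.mk _ q)
    (hp : p.degree < n) (hq : q.degree < n) : p = q := by
  have hM := Polynomial.monic_X_pow_sub_C μ hn.ne'
  rw [← Polynomial.degree_X_pow_sub_C hn μ] at hp hq
  rw [← (Polynomial.modByMonic_eq_self_iff hM).mpr hp,
    ← (Polynomial.modByMonic_eq_self_iff hM).mpr hq]
  exact Polynomial.modByMonic_eq_of_dvd_sub hM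
    (Ideal.mem_span_singleton.mp (Ideal.Quotient.eq.mp h))

lemma eq_of_mk_toPoly_eq [Nontrivial S] (hn : 0 < n) (μ : S) {c d : Fin n → S}
    (h : Ideal.Quotient.mk (Ideal.span {Polynomial.X ^ n - Polynomial.C μ}) (toPoly c) =
      Ideal.Quotient.mk _ (toPoly d)) : c = d := by
  have hcd := eq_of_mk_eq_of_degree_lt hn μ h (degree_toPoly_lt c) (degree_toPoly_lt d)
  funext j
  rw [← coeff_toPoly c j, hcd, coeff_toPoly]

end CoeffVector

section FieldDual
variable {K : Type} [Field K] {n : ℕ}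

def truncMul (n : ℕ) (G : K[X]) (m : ℕ) : Polynomial.degreeLT K m →ₗ[K] (Fin n → K) :=
  truncCoeffs n ∘ₗ LinearMap.mulLeft K G ∘ₗ (Polynomial.degreeLT K m).subtype

lemma truncMul_apply (G : K[X]) (m : ℕ) (a : Polynomial.degreeLT K m) (j : Fin n) :
    truncMul n G m a j = (G * a).coeff j :=
  rfl

lemma range_truncMul (G : K[X]) (m : ℕ) :
    LinearMap.range (truncMul n G m) =
      Submodule.span K ((fun l => truncCoeffs n (G * Polynomial.X ^ l)) '' Set.Iio m) := by
  classical
  rw [truncMul, LinearMap.range_comp, LinearMap.range_comp, Submodule.range_subtype,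
    Polynomial.degreeLT_eq_span_X_pow, Submodule.map_span, Submodule.map_span,
    Finset.coe_image, Finset.coe_range, Set.image_image, Set.image_image]
  rfl

lemma degree_mul_lt_of_mem_degreeLT {G a : K[X]} {m : ℕ} (hm : G.natDegree + m ≤ n)
    (ha : a ∈ Polynomial.degreeLT K m) : (G * a).degree < n := by
  rcases eq_or_ne G 0 with rfl | hG
  · simp
  rcases eq_or_ne a 0 with rfl | ha0
  · simp
  rw [Polynomial.degree_mul, Polynomial.degree_eq_natDegree hG, Polynomial.degree_eq_natDegree ha0]
  have := (Polynomial.natDegree_lt_iff_degree_lt ha0).mpr (Polynomial.mem_degreeLT.mp ha)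
  exact_mod_cast (by omega : G.natDegree + a.natDegree < n)

lemma injective_truncMul {G : K[X]} {m : ℕ} (hG : G ≠ 0) (hm : G.natDegree + m ≤ n) :
    Function.Injective (truncMul n G m) := by
  rw [← LinearMap.ker_eq_bot, Submodule.eq_bot_iff]
  rintro ⟨a, ha⟩ hker
  have hlt := degree_mul_lt_of_mem_degreeLT hm ha
  have hGa : G * a = 0 := Polynomial.ext fun k => by
    by_cases hk : k < n
    · exact congrFun (LinearMap.mem_ker.mp hker) ⟨k, hk⟩
    · exact Polynomial.coeff_eq_zero_of_degree_lt (hlt.trans_le (by exact_mod_cast not_lt.mp hk))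
  exact Subtype.ext ((mul_eq_zero.mp hGa).resolve_left hG)

lemma finrank_range_truncMul {G : K[X]} {m : ℕ} (hG : G ≠ 0) (hm : G.natDegree + m ≤ n) :
    Module.finrank K (LinearMap.range (truncMul n G m)) = m := by
  rw [LinearMap.finrank_range_of_inj (injective_truncMul hG hm),
    (Polynomial.degreeLTEquiv K m).finrank_eq, Module.finrank_fin_fun]

lemma vecOf_span_eq_range_truncMul (hn : 0 < n) {ν : K} {G H : K[X]}
    (hGH : G * H = Polynomial.X ^ n - Polynomial.C ν) :
    vecOf ν (Ideal.span {Ideal.Quotient.mk _ G}) =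
      (LinearMap.range (truncMul n G H.natDegree) : Set (Fin n → K)) := by
  have hGH0 : G * H ≠ 0 := hGH ▸ (Polynomial.monic_X_pow_sub_C ν hn.ne').ne_zero
  obtain ⟨hG, hH⟩ := mul_ne_zero_iff.mp hGH0
  have hdeg : G.natDegree + H.natDegree = n := by
    rw [← Polynomial.natDegree_mul hG hH, hGH, Polynomial.natDegree_X_pow_sub_C]
  ext c
  rw [mem_vecOf, Ideal.mem_span_singleton', SetLike.mem_coe, LinearMap.mem_range]
  constructor
  · rintro ⟨b, hb⟩
    obtain ⟨a, rfl⟩ := Ideal.Quotient.mk_surjective b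
    have ha' : a % H ∈ Polynomial.degreeLT K H.natDegree := by
      rw [Polynomial.mem_degreeLT, ← Polynomial.degree_eq_natDegree hH]
      exact EuclideanDomain.mod_lt a hH
    have hmk : Ideal.Quotient.mk (Ideal.span {Polynomial.X ^ n - Polynomial.C ν}) (G * (a % H)) =
        Ideal.Quotient.mk _ (toPoly c) := by
      rw [← hb, ← map_mul, Ideal.Quotient.eq, Ideal.mem_span_singleton, ← hGH]
      exact ⟨-(a / H), by linear_combination G * EuclideanDomain.mod_add_div a H⟩
    have hc := eq_of_mk_eq_of_degree_lt hn ν hmk (degree_mul_lt_of_mem_degreeLT hdeg.le ha')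
      (degree_toPoly_lt c)
    exact ⟨⟨a % H, ha'⟩, funext fun j => by rw [truncMul_apply, hc, coeff_toPoly]⟩
  · rintro ⟨⟨a, ha⟩, rfl⟩
    refine ⟨Ideal.Quotient.mk _ a, ?_⟩
    rw [← map_mul, mul_comm]
    exact congrArg _ (toPoly_coeff_of_degree_lt (degree_mul_lt_of_mem_degreeLT hdeg.le ha)).symm

lemma natDegree_add_natDegree_of_mul_eq (hn : 0 < n) {ν : K} {G H : K[X]}
    (hGH : G * H = Polynomial.X ^ n - Polynomial.C ν) : G.natDegree + H.natDegree = n := by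
  have hGH0 : G * H ≠ 0 := hGH ▸ (Polynomial.monic_X_pow_sub_C ν hn.ne').ne_zero
  rw [← Polynomial.natDegree_mul (left_ne_zero_of_mul hGH0) (right_ne_zero_of_mul hGH0), hGH,
    Polynomial.natDegree_X_pow_sub_C]

lemma reverse_X_pow_sub_C (ν : K) :
    (Polynomial.X ^ n - Polynomial.C ν).reverse = 1 - Polynomial.C ν * Polynomial.X ^ n := by
  rw [Polynomial.reverse, Polynomial.natDegree_X_pow_sub_C, Polynomial.reflect_sub,
    Polynomial.reflect_monomial, Polynomial.reflect_C, Polynomial.revAt_le le_rfl, Nat.sub_self,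
    pow_zero]

lemma reverse_mul_X_pow_eq_reflect (h : K[X]) (k : ℕ) :
    h.reverse * Polynomial.X ^ k = Polynomial.reflect (h.natDegree + k) h := by
  have := Polynomial.reflect_mul h 1 le_rfl (Polynomial.natDegree_one.trans_le k.zero_le)
  rwa [mul_one, Polynomial.reflect_one, eq_comm] at this

lemma nondegenerate_dotProductBilin :
    (dotProductBilin K K : LinearMap.BilinForm K (Fin n → K)).Nondegenerate :=
  ⟨fun x hx => dotProduct_eq_zero x hx,
    fun y hy => dotProduct_eq_zero y fun x => (dotProduct_comm y x).trans (hy x)⟩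

lemma dualCode_eq_orthogonal (W : Submodule K (Fin n → K)) :
    dualCode (W : Set (Fin n → K)) =
      LinearMap.BilinForm.orthogonal (dotProductBilin K K) W := by
  ext r
  exact forall₂_congr fun s _ => by rw [dotProductBilin_apply_apply, dotProduct_comm]; rfl

lemma truncCoeffs_mul_X_pow_dotProduct_reverse {ν : K} {g h : K[X]}
    (hgh : g * h = Polynomial.X ^ n - Polynomial.C ν) (hdeg : g.natDegree + h.natDegree = n)
    {k l : ℕ} (hk : k < g.natDegree) (hl : l < h.natDegree) :
    truncCoeffs n (g * Polynomial.X ^ l) ⬝ᵥ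
      truncCoeffs n (h.reverse * Polynomial.X ^ k) = 0 := by
  rw [reverse_mul_X_pow_eq_reflect, truncCoeffs_dotProduct_reflect (by omega) _ (by omega),
    show h.natDegree + k = (h.natDegree + k - l) + l by omega, mul_right_comm,
    Polynomial.coeff_mul_X_pow, hgh, Polynomial.coeff_sub, Polynomial.coeff_X_pow,
    Polynomial.coeff_C, if_neg (by omega), if_neg (by omega), sub_zero]

theorem dualCode_vecOf_span_eq (hn : 0 < n) {ν : K} (hν : ν ≠ 0) {g h : K[X]}
    (hgh : g * h = Polynomial.X ^ n - Polynomial.C ν) :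
    dualCode (vecOf ν (Ideal.span {Ideal.Quotient.mk _ g})) =
      vecOf ν⁻¹ (Ideal.span {Ideal.Quotient.mk
        (Ideal.span {Polynomial.X ^ n - Polynomial.C ν⁻¹}) (recip h)}) := by
  have hdeg := natDegree_add_natDegree_of_mul_eq hn hgh
  have hh0 : h.coeff 0 ≠ 0 := by
    have h0 : g.coeff 0 * h.coeff 0 = -ν := by
      rw [← Polynomial.mul_coeff_zero, hgh]
      simp [hn.ne]
    exact right_ne_zero_of_mul (h0 ▸ neg_ne_zero.mpr hν)
  have htrail : h.natTrailingDegree = 0 := Polynomial.natTrailingDegree_eq_zero.mpr (Or.inr hh0)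
  have hrecip : recip h = h.reverse := by rw [recip, htrail, pow_zero, one_mul]
  have hrevdeg : h.reverse.natDegree = h.natDegree := by
    rw [Polynomial.reverse_natDegree, htrail, Nat.sub_zero]
  have hrevfac : h.reverse * (Polynomial.C (-ν⁻¹) * g.reverse) =
      Polynomial.X ^ n - Polynomial.C ν⁻¹ := by
    have hrev := congrArg Polynomial.reverse hgh
    rw [Polynomial.reverse_mul_of_domain, reverse_X_pow_sub_C] at hrev
    have hC : Polynomial.C ν⁻¹ * Polynomial.C ν = 1 := by
      rw [← Polynomial.C_mul, inv_mul_cancel₀ hν, Polynomial.C_1]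
    rw [Polynomial.C_neg]
    linear_combination (-Polynomial.C ν⁻¹) * hrev + Polynomial.X ^ n * hC
  have hdeg' := natDegree_add_natDegree_of_mul_eq hn hrevfac
  set W := LinearMap.range (truncMul n g h.natDegree) with hW
  set W' := LinearMap.range (truncMul n h.reverse (Polynomial.C (-ν⁻¹) * g.reverse).natDegree)
    with hW'
  have hle : W' ≤ LinearMap.BilinForm.orthogonal (dotProductBilin K K) W := by
    rw [hW', range_truncMul, Submodule.span_le]
    rintro _ ⟨k, hk, rfl⟩
    have hWker : W ≤ LinearMap.ker ((dotProductBilin K K).flip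
        (truncCoeffs n (h.reverse * Polynomial.X ^ k))) := by
      rw [hW, range_truncMul, Submodule.span_le]
      rintro _ ⟨l, hl, rfl⟩
      exact truncCoeffs_mul_X_pow_dotProduct_reverse hgh hdeg
        (by have := Set.mem_Iio.mp hk; omega) (Set.mem_Iio.mp hl)
    exact fun v hv => hWker hv
  have hfinrank : Module.finrank K W' =
      Module.finrank K (LinearMap.BilinForm.orthogonal (dotProductBilin K K) W) := by
    rw [LinearMap.BilinForm.finrank_orthogonal nondegenerate_dotProductBilin,
      finrank_range_truncMul (left_ne_zero_of_mul (hgh ▸ Polynomial.X_pow_sub_C_ne_zero hn ν))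
        hdeg.le,
      finrank_range_truncMul (left_ne_zero_of_mul (hrevfac ▸ Polynomial.X_pow_sub_C_ne_zero hn _))
        hdeg'.le,
      Module.finrank_fin_fun]
    omega
  calc dualCode (vecOf ν (Ideal.span {Ideal.Quotient.mk _ g}))
      = dualCode (W : Set (Fin n → K)) := by rw [vecOf_span_eq_range_truncMul hn hgh]
    _ = LinearMap.BilinForm.orthogonal (dotProductBilin K K) W := dualCode_eq_orthogonal W
    _ = (W' : Set (Fin n → K)) := by rw [Submodule.eq_of_le_of_finrank_eq hle hfinrank]
    _ = _ := by rw [hrecip, vecOf_span_eq_range_truncMul hn hrevfac]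

end FieldDual

section Idempotents
variable (F : Type) [Field F]

lemma uu_sq : uu F ^ 2 = uu F :=
  sub_eq_zero.mp <| by
    rw [uu, ← map_pow, ← map_sub, Ideal.Quotient.eq_zero_iff_mem]
    exact Ideal.subset_span (Or.inl rfl)

lemma vv_sq : vv F ^ 2 = vv F :=
  sub_eq_zero.mp <| by
    rw [vv, ← map_pow, ← map_sub, Ideal.Quotient.eq_zero_iff_mem]
    exact Ideal.subset_span (Or.inr rfl)

lemma phiI_uu (i : Fin 4) : phiI F i (uu F) = ![0, 1, 1, 0] i := by
  fin_cases i <;> simp [phiI, phi4, uu]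

lemma phiI_vv (i : Fin 4) : phiI F i (vv F) = ![0, 1, 0, 1] i := by
  fin_cases i <;> simp [phiI, phi4, vv]

lemma phiI_algebraMap (i : Fin 4) (a : F) : phiI F i (algebraMap F (Rq F) a) = a := by
  fin_cases i <;> exact MvPolynomial.aeval_C _ a

lemma phiI_ee (i j : Fin 4) : phiI F i (ee F j) = if i = j then 1 else 0 := by
  fin_cases i <;> fin_cases j <;> simp [ee, phiI_uu, phiI_vv]

lemma sum_ee : ∑ i, ee F i = 1 := by
  simp only [ee, Fin.sum_univ_four, Fin.isValue, Matrix.cons_val_zero, Matrix.cons_val_one,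
    Matrix.cons_val]
  ring

lemma ee_mul_uu (i : Fin 4) : ee F i * uu F = algebraMap F (Rq F) (phiI F i (uu F)) * ee F i := by
  have hu := uu_sq F
  fin_cases i <;> simp only [ee, phiI_uu, Fin.isValue, Fin.zero_eta, Fin.mk_one,
    Fin.reduceFinMk, Matrix.cons_val, Matrix.cons_val_zero, Matrix.cons_val_one, map_zero, map_one,
    zero_mul, one_mul]
  · linear_combination (vv F - 1) * hu
  · linear_combination vv F * hu
  · linear_combination (1 - vv F) * hu
  · linear_combination (-vv F) * hu

lemma ee_mul_vv (i : Fin 4) : ee F i * vv F = algebraMap F (Rq F) (phiI F i (vv F)) * ee F i := by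
  have hv := vv_sq F
  fin_cases i <;> simp only [ee, phiI_vv, Fin.isValue, Fin.zero_eta, Fin.mk_one,
    Fin.reduceFinMk, Matrix.cons_val, Matrix.cons_val_zero, Matrix.cons_val_one, map_zero, map_one,
    zero_mul, one_mul]
  · linear_combination (uu F - 1) * hv
  · linear_combination uu F * hv
  · linear_combination (-uu F) * hv
  · linear_combination (1 - uu F) * hv

lemma ee_mul (i : Fin 4) (r : Rq F) :
    ee F i * r = algebraMap F (Rq F) (phiI F i r) * ee F i := by
  obtain ⟨p, rfl⟩ := Ideal.Quotient.mk_surjective r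
  induction p using MvPolynomial.induction_on with
  | C a =>
    rw [← MvPolynomial.algebraMap_eq, ← Ideal.Quotient.algebraMap_eq,
      ← IsScalarTower.algebraMap_apply, phiI_algebraMap, mul_comm]
  | add p q hp hq => rw [map_add, mul_add, hp, hq, map_add, map_add, add_mul]
  | mul_X p j hp =>
    have hX : ee F i * Ideal.Quotient.mk _ (MvPolynomial.X j) =
        algebraMap F (Rq F) (phiI F i (Ideal.Quotient.mk _ (MvPolynomial.X j))) * ee F i := by
      fin_cases j
      exacts [ee_mul_uu F i, ee_mul_vv F i]
    rw [map_mul, ← mul_assoc, hp, mul_assoc, hX, ← mul_assoc, ← map_mul, ← map_mul]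

lemma sum_algebraMap_phiI_mul_ee (r : Rq F) :
    ∑ i, algebraMap F (Rq F) (phiI F i r) * ee F i = r := by
  simp_rw [← ee_mul, ← Finset.sum_mul, sum_ee, one_mul]

lemma eq_zero_of_forall_phiI_eq_zero {r : Rq F} (h : ∀ i, phiI F i r = 0) : r = 0 := by
  simpa [h] using (sum_algebraMap_phiI_mul_ee F r).symm

end Idempotents

instance (F : Type) [Field F] : Nontrivial (Rq F) :=
  ⟨⟨1, 0, fun h => one_ne_zero (α := F) (by simpa using congrArg (phiI F 0) h)⟩⟩

section Components
variable {F : Type} [Field F] {n : ℕ} {lam : Rq F}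

def idempotentSum (q : Fin 4 → F[X]) : (Rq F)[X] :=
  ∑ j, Polynomial.C (ee F j) * (q j).map (algebraMap F (Rq F))

lemma quotMap_mk (i : Fin 4) (p : (Rq F)[X]) :
    quotMap F n lam i (Ideal.Quotient.mk _ p) = Ideal.Quotient.mk _ (p.map (phiI F i)) :=
  rfl

lemma map_phiI_map_algebraMap (i : Fin 4) (q : F[X]) :
    (q.map (algebraMap F (Rq F))).map (phiI F i) = q := by
  rw [Polynomial.map_map]
  convert Polynomial.map_id
  exact RingHom.ext (phiI_algebraMap F i)

lemma map_phiI_idempotentSum (i : Fin 4) (q : Fin 4 → F[X]) :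
    (idempotentSum q).map (phiI F i) = q i := by
  simp [idempotentSum, Polynomial.map_sum, map_phiI_map_algebraMap, phiI_ee]

lemma quotMap_surjective (i : Fin 4) : Function.Surjective (quotMap F n lam i) := by
  intro y
  obtain ⟨q, rfl⟩ := Ideal.Quotient.mk_surjective y
  exact ⟨Ideal.Quotient.mk _ (q.map (algebraMap F (Rq F))), by
    rw [quotMap_mk, map_phiI_map_algebraMap]⟩

lemma quotMap_mk_toPoly (i : Fin 4) (c : Fin n → Rq F) :
    quotMap F n lam i (Ideal.Quotient.mk _ (toPoly c)) =
      Ideal.Quotient.mk _ (toPoly (phiI F i ∘ c)) := by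
  rw [quotMap_mk, map_toPoly]

lemma eq_of_forall_map_phiI_eq {p q : (Rq F)[X]} (h : ∀ i, p.map (phiI F i) = q.map (phiI F i)) :
    p = q := by
  ext k
  rw [← sub_eq_zero]
  refine eq_zero_of_forall_phiI_eq_zero F fun i => ?_
  rw [map_sub, sub_eq_zero, ← Polynomial.coeff_map, ← Polynomial.coeff_map, h i]

lemma eq_zero_of_forall_quotMap_eq_zero
    {z : (Rq F)[X] ⧸ Ideal.span {Polynomial.X ^ n - Polynomial.C lam}}
    (hz : ∀ i, quotMap F n lam i z = 0) : z = 0 := by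
  obtain ⟨p, rfl⟩ := Ideal.Quotient.mk_surjective z
  have hdvd (i : Fin 4) :
      Polynomial.X ^ n - Polynomial.C (phiI F i lam) ∣ p.map (phiI F i) := by
    rw [← Ideal.mem_span_singleton, ← Ideal.Quotient.eq_zero_iff_mem, ← quotMap_mk]
    exact hz i
  choose q hq using hdvd
  have hp : p = (Polynomial.X ^ n - Polynomial.C lam) * idempotentSum q :=
    eq_of_forall_map_phiI_eq fun i => by simp [hq i, map_phiI_idempotentSum]
  rw [hp, Ideal.Quotient.eq_zero_iff_mem]
  exact Ideal.mul_mem_right _ _ (Ideal.subset_span rfl)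

lemma mem_span_idempotentSum_iff (q : Fin 4 → F[X])
    (z : (Rq F)[X] ⧸ Ideal.span {Polynomial.X ^ n - Polynomial.C lam}) :
    z ∈ Ideal.span {Ideal.Quotient.mk _ (idempotentSum q)} ↔
      ∀ i, quotMap F n lam i z ∈ Ideal.span {Ideal.Quotient.mk _ (q i)} := by
  have hq (i : Fin 4) : quotMap F n lam i (Ideal.Quotient.mk _ (idempotentSum q)) =
      Ideal.Quotient.mk _ (q i) := by
    rw [quotMap_mk, map_phiI_idempotentSum]
  simp only [Ideal.mem_span_singleton']
  constructor
  · rintro ⟨b, rfl⟩ i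
    exact ⟨quotMap F n lam i b, by rw [map_mul, hq]⟩
  · intro hz
    choose b hb using hz
    choose a ha using fun i => Ideal.Quotient.mk_surjective (b i)
    refine ⟨Ideal.Quotient.mk _ (idempotentSum a), Eq.symm (sub_eq_zero.mp ?_)⟩
    refine eq_zero_of_forall_quotMap_eq_zero fun i => ?_
    rw [map_sub, map_mul, hq, quotMap_mk, map_phiI_idempotentSum, ha, hb, sub_self]

lemma mem_dualCode_vecOf_iff (hn : 0 < n)
    (C : Ideal ((Rq F)[X] ⧸ Ideal.span {Polynomial.X ^ n - Polynomial.C lam}))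
    (r : Fin n → Rq F) :
    r ∈ dualCode (vecOf lam C) ↔
      ∀ i, phiI F i ∘ r ∈ dualCode (vecOf (phiI F i lam) (C.map (quotMap F n lam i))) := by
  constructor
  · intro hr i t ht
    rw [mem_vecOf, Ideal.mem_map_iff_of_surjective _ (quotMap_surjective i)] at ht
    obtain ⟨c, hc, hct⟩ := ht
    obtain ⟨s, rfl⟩ := exists_mk_toPoly_eq hn lam c
    rw [quotMap_mk_toPoly] at hct
    obtain rfl := eq_of_mk_toPoly_eq hn _ hct
    simpa using congrArg (phiI F i) (hr s hc)
  · intro hr s hs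
    refine eq_zero_of_forall_phiI_eq_zero F fun i => ?_
    have hmem : phiI F i ∘ s ∈ vecOf (phiI F i lam) (C.map (quotMap F n lam i)) := by
      rw [mem_vecOf, ← quotMap_mk_toPoly]
      exact Ideal.mem_map_of_mem _ hs
    simpa using hr i _ hmem

end Components

theorem stmt12_general (F : Type) [Field F] (n : ℕ) (hn : 0 < n)
    (lu : (Rq F)ˣ)
    (C : Ideal (Polynomial (Rq F) ⧸
      Ideal.span {Polynomial.X ^ n - Polynomial.C (lu : Rq F)}))
    (g h : Fin 4 → Polynomial F)
    (hgen : ∀ i, Ideal.map (quotMap F n (lu : Rq F) i) C =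
      Ideal.span {Ideal.Quotient.mk _ (g i)})
    (hfac : ∀ i, g i * h i = Polynomial.X ^ n - Polynomial.C (phiI F i (lu : Rq F))) :
    dualCode (vecOf (lu : Rq F) C) =
      vecOf ((lu⁻¹ : (Rq F)ˣ) : Rq F)
        (Ideal.span {Ideal.Quotient.mk _
          (∑ i : Fin 4, Polynomial.C (ee F i) *
            (recip (h i)).map (algebraMap F (Rq F)))}) := by
  ext r
  rw [mem_dualCode_vecOf_iff hn C r, mem_vecOf]
  change _ ↔ _ ∈ Ideal.span {Ideal.Quotient.mk _ (idempotentSum fun i => recip (h i))}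
  rw [mem_span_idempotentSum_iff]
  refine forall_congr' fun i => ?_
  have hν : phiI F i lu ≠ 0 := (lu.isUnit.map (phiI F i)).ne_zero
  rw [hgen i, dualCode_vecOf_span_eq hn hν (hfac i), ← map_units_inv, quotMap_mk_toPoly]
  rfl

theorem stmt12 (F : Type) [Field F] [Fintype F] (n : ℕ) (hn : 0 < n)
    (lu : (Rq F)ˣ)
    (C : Ideal (Polynomial (Rq F) ⧸
      Ideal.span {Polynomial.X ^ n - Polynomial.C (lu : Rq F)}))
    (g h : Fin 4 → Polynomial F)
    (hmonic : ∀ i, (g i).Monic)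
    (hgen : ∀ i, Ideal.map (quotMap F n (lu : Rq F) i) C =
      Ideal.span {Ideal.Quotient.mk _ (g i)})
    (hfac : ∀ i, g i * h i = Polynomial.X ^ n - Polynomial.C (phiI F i (lu : Rq F))) :
    dualCode (vecOf (lu : Rq F) C) =
      vecOf ((lu⁻¹ : (Rq F)ˣ) : Rq F)
        (Ideal.span {Ideal.Quotient.mk _
          (∑ i : Fin 4, Polynomial.C (ee F i) *
            (recip (h i)).map (algebraMap F (Rq F)))}) :=
  stmt12_general F n hn lu C g h hgen hfac
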